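/- arXiv:2503.20329 — 3 statements merged into one kernel-verified Lean document; each statement's English description precedes it below -/
import Mathlib

section
/- Let G be a connected finite simple graph with a cut vertex v, let H_1, …, H_k (k ≥ 2) be the connected components of G − v, and for each i ∈ {1,…,k} let G_i be the subgraph of G induced by V(H_i) ∪ {v}. Then each G_i is connected and y_G = (Σ_{i=1}^{k} y_{G_i}) − k + 1. (Equivalently: if G is obtained from vertex-disjoint connected graphs G_1, …, G_k by identifying one chosen vertex v_i of each G_i into a single vertex, then y_G = Σ_{i=1}^{k} y_{G_i} − k + 1.) -/
/-!
Retracting every vertex outside a piece `G_i` onto the cut vertex `v` turns walks of `G - A`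
into walks of `G_i - A_i`, so two vertices of `G_i` are joined in `G - A` iff they are joined
in `G_i - A_i`. Hence the components of `G - A` avoiding `v` are exactly the components of the
`G_i - A_i` avoiding `v`, which gives `c(G - A) + k = Σ c(G_i - A_i) + 1`, while `A` is the
disjoint union of the `A_i`. So `y_G(A) = Σ y_{G_i}(A_i) - k + 1`, and since `A ↦ (A_i)` is a
bijection from edge sets of `G` to tuples of edge sets of the pieces, maximizing both sides
gives the formula.
-/

open SimpleGraph

/-- The number of connected components of a graph. -/
noncomputable def numComp {V : Type*} (G : SimpleGraph V) : ℕ :=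
  Nat.card G.ConnectedComponent

/-- `y_G(A) = 2 c(G - A) - |A| - 1`. -/
noncomputable def yVal {V : Type*} (G : SimpleGraph V) (A : Set (Sym2 V)) : ℤ :=
  2 * (numComp (G.deleteEdges A) : ℤ) - (A.ncard : ℤ) - 1

/-- `y_G = max_{A ⊆ E(G)} y_G(A)`. -/
noncomputable def yMax {V : Type*} (G : SimpleGraph V) : ℤ :=
  sSup { y : ℤ | ∃ A ⊆ G.edgeSet, yVal G A = y }

lemma finite_yVal_set {V : Type*} [Finite V] (G : SimpleGraph V) :
    {y : ℤ | ∃ A ⊆ G.edgeSet, yVal G A = y}.Finite :=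
  (Set.finite_range (yVal G)).subset fun _ ⟨A, _, hA⟩ => ⟨A, hA⟩

lemma yVal_le_yMax {V : Type*} [Finite V] {G : SimpleGraph V} {A : Set (Sym2 V)}
    (hA : A ⊆ G.edgeSet) : yVal G A ≤ yMax G :=
  le_csSup (finite_yVal_set G).bddAbove ⟨A, hA, rfl⟩

lemma exists_yVal_eq_yMax {V : Type*} [Finite V] (G : SimpleGraph V) :
    ∃ A ⊆ G.edgeSet, yVal G A = yMax G :=
  Set.Nonempty.csSup_mem (s := {y : ℤ | ∃ A ⊆ G.edgeSet, yVal G A = y})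
    ⟨_, ∅, Set.empty_subset _, rfl⟩ (finite_yVal_set G)

namespace SimpleGraph

variable {V ι : Type*}

/-- `G` is obtained from the induced subgraphs `G[S i]` by identifying one vertex of each
of them into the single vertex `v`. -/
structure IsWedgeAt (G : SimpleGraph V) (v : V) (S : ι → Set V) : Prop where
  mem : ∀ i, v ∈ S i
  inter_subset : Pairwise fun i j => S i ∩ S j ⊆ {v}
  exists_mem : ∀ x, x ≠ v → ∃ i, x ∈ S i
  exists_mem_of_adj : ∀ ⦃x y⦄, G.Adj x y → ∃ i, x ∈ S i ∧ y ∈ S i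

lemma induce_deleteEdges (G : SimpleGraph V) (s : Set V) (A : Set (Sym2 V)) :
    (G.deleteEdges A).induce s = (G.induce s).deleteEdges (Sym2.map Subtype.val ⁻¹' A) := by
  ext x y
  simp

lemma preimage_subset_induce_edgeSet {G : SimpleGraph V} {A : Set (Sym2 V)}
    (hA : A ⊆ G.edgeSet) (s : Set V) :
    Sym2.map Subtype.val ⁻¹' A ⊆ (G.induce s).edgeSet := fun _ he =>
  (Embedding.induce s).map_mem_edgeSet_iff.1 (hA he)

open Classical in
noncomputable def retract {v : V} {s : Set V} (hv : v ∈ s) (x : V) : s :=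
  if hx : x ∈ s then ⟨x, hx⟩ else ⟨v, hv⟩

lemma retract_of_mem {v x : V} {s : Set V} (hv : v ∈ s) (hx : x ∈ s) :
    retract hv x = ⟨x, hx⟩ :=
  dif_pos hx

open Classical in
noncomputable def pieceComponentClass (G : SimpleGraph V) (v : V) (S : ι → Set V)
    (p : Σ i, (G.induce (S i)).ConnectedComponent) :
    {C : G.ConnectedComponent // C ≠ G.connectedComponentMk v} ⊕ ι :=
  if hC : p.2.map (Embedding.induce (S p.1)).toHom = G.connectedComponentMk v then .inr p.1
  else .inl ⟨_, hC⟩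

namespace IsWedgeAt

variable {G H : SimpleGraph V} {v : V} {S : ι → Set V}

lemma mono (h : G.IsWedgeAt v S) (hHG : H ≤ G) : H.IsWedgeAt v S :=
  { h with exists_mem_of_adj := fun _ _ hxy => h.exists_mem_of_adj (hHG hxy) }

lemma eq_of_mem_of_mem (h : G.IsWedgeAt v S) {i j : ι} (hij : i ≠ j) {x : V}
    (hi : x ∈ S i) (hj : x ∈ S j) : x = v :=
  h.inter_subset hij ⟨hi, hj⟩

lemma retract_eq_of_mem (h : G.IsWedgeAt v S) {i j : ι} (hij : i ≠ j) {x : V} (hx : x ∈ S j) :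
    retract (h.mem i) x = ⟨v, h.mem i⟩ := by
  by_cases hxi : x ∈ S i
  · rw [retract_of_mem _ hxi]
    exact Subtype.ext (h.eq_of_mem_of_mem hij hxi hx)
  · exact dif_neg hxi

/-- An edge of `G` outside `G[S i]` has both ends retracted to `v`, so the retraction turns
walks of `G` into walks of `G[S i]`. -/
lemma reachable_retract (h : G.IsWedgeAt v S) (i : ι) {x y : V} (hxy : G.Reachable x y) :
    (G.induce (S i)).Reachable (retract (h.mem i) x) (retract (h.mem i) y) := by
  rw [reachable_iff_reflTransGen] at hxy ⊢
  refine Relation.ReflTransGen.lift' _ (fun a b hab => ?_) _ _ hxy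
  obtain ⟨j, ha, hb⟩ := h.exists_mem_of_adj hab
  by_cases hij : i = j
  · subst hij
    rw [Function.onFun, retract_of_mem _ ha, retract_of_mem _ hb]
    exact .single hab
  · rw [Function.onFun, h.retract_eq_of_mem hij ha, h.retract_eq_of_mem hij hb]

lemma reachable_induce_iff (h : G.IsWedgeAt v S) {i : ι} {x y : V} (hx : x ∈ S i)
    (hy : y ∈ S i) : (G.induce (S i)).Reachable ⟨x, hx⟩ ⟨y, hy⟩ ↔ G.Reachable x y := by
  refine ⟨fun hxy => hxy.map (Embedding.induce (S i)).toHom, fun hxy => ?_⟩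
  simpa only [retract_of_mem _ hx, retract_of_mem _ hy] using h.reachable_retract i hxy

lemma induce_connected (h : G.IsWedgeAt v S) (hG : G.Connected) (i : ι) :
    (G.induce (S i)).Connected :=
  (connected_iff _).2 ⟨fun x y => (h.reachable_induce_iff x.2 y.2).2 (hG.preconnected x y),
    ⟨⟨v, h.mem i⟩⟩⟩

lemma map_induce_injective (h : G.IsWedgeAt v S) (i : ι) :
    Function.Injective fun C : (G.induce (S i)).ConnectedComponent =>
      C.map (Embedding.induce (S i)).toHom := by
  refine ConnectedComponent.ind₂ fun x y hxy => ?_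
  simp only [ConnectedComponent.map_mk, ConnectedComponent.eq] at hxy
  exact ConnectedComponent.sound ((h.reachable_induce_iff x.2 y.2).2 hxy)

lemma map_induce_eq_of_ne (h : G.IsWedgeAt v S) {i j : ι} (hij : i ≠ j)
    {C : (G.induce (S i)).ConnectedComponent} {D : (G.induce (S j)).ConnectedComponent}
    (hCD : C.map (Embedding.induce (S i)).toHom = D.map (Embedding.induce (S j)).toHom) :
    C.map (Embedding.induce (S i)).toHom = G.connectedComponentMk v := by
  induction C using ConnectedComponent.ind with | h x => ?_
  induction D using ConnectedComponent.ind with | h y => ?_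
  simp only [ConnectedComponent.map_mk, ConnectedComponent.eq] at hCD ⊢
  have hxv := h.reachable_retract i (x := x) (y := y) hCD
  rw [retract_of_mem _ x.2, h.retract_eq_of_mem hij y.2] at hxv
  exact hxv.map (Embedding.induce (S i)).toHom

lemma pieceComponentClass_bijective (h : G.IsWedgeAt v S) :
    Function.Bijective (pieceComponentClass G v S) := by
  constructor
  · rintro ⟨i, C⟩ ⟨j, D⟩ hCD
    simp only [pieceComponentClass] at hCD
    split_ifs at hCD with hC hD hD
    · obtain rfl : i = j := Sum.inr_injective hCD
      rw [h.map_induce_injective i (hC.trans hD.symm)]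
    · simp only [Sum.inl.injEq, Subtype.mk.injEq] at hCD
      obtain rfl : i = j := by_contra fun hij => hC (h.map_induce_eq_of_ne hij hCD)
      rw [h.map_induce_injective i hCD]
  · rintro (⟨C, hC⟩ | i)
    · induction C using ConnectedComponent.ind with | h x => ?_
      obtain ⟨i, hi⟩ := h.exists_mem x fun hxv => hC (hxv ▸ rfl)
      exact ⟨⟨i, (G.induce (S i)).connectedComponentMk ⟨x, hi⟩⟩, dif_neg hC⟩
    · exact ⟨⟨i, (G.induce (S i)).connectedComponentMk ⟨v, h.mem i⟩⟩, dif_pos rfl⟩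

lemma numComp_add_card [Finite V] [Fintype ι] (h : G.IsWedgeAt v S) :
    numComp G + Fintype.card ι = ∑ i, numComp (G.induce (S i)) + 1 := by
  classical
  have hcard := Nat.card_eq_of_bijective _ h.pieceComponentClass_bijective
  rw [Nat.card_sigma, Nat.card_sum, Nat.card_eq_fintype_card (α := ι)] at hcard
  have hcompl : Nat.card {C // C ≠ G.connectedComponentMk v} + 1 = numComp G := by
    rw [← Finite.card_option, Nat.card_congr (Equiv.optionSubtypeNe _), numComp]
  simp only [numComp] at hcompl ⊢
  omega

lemma sigma_eq_of_map_eq (h : G.IsWedgeAt v S) {i j : ι} {e : Sym2 (S i)} {e' : Sym2 (S j)}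
    (he : e.map Subtype.val ∈ G.edgeSet) (hee : e.map Subtype.val = e'.map Subtype.val) :
    (⟨i, e⟩ : Σ i, Sym2 (S i)) = ⟨j, e'⟩ := by
  by_cases hij : i = j
  · subst hij
    rw [Sym2.map.injective Subtype.val_injective hee]
  · have hmem : ∀ x ∈ e.map Subtype.val, x = v := fun x hx => by
      obtain ⟨a, -, rfl⟩ := Sym2.mem_map.1 hx
      obtain ⟨b, -, hb⟩ := Sym2.mem_map.1 (hee ▸ hx)
      exact h.eq_of_mem_of_mem hij a.2 (hb ▸ b.2)
    induction e using Sym2.ind with | h x y => ?_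
    rw [Sym2.map_mk, mem_edgeSet] at he
    exact absurd ((hmem x (by simp)).trans (hmem y (by simp)).symm) he.ne

lemma ncard_eq_sum_ncard_preimage [Finite V] [Fintype ι] (h : G.IsWedgeAt v S)
    {A : Set (Sym2 V)} (hA : A ⊆ G.edgeSet) :
    A.ncard = ∑ i, (Sym2.map Subtype.val ⁻¹' A : Set (Sym2 (S i))).ncard := by
  let f : (Σ i, (Sym2.map Subtype.val ⁻¹' A : Set (Sym2 (S i)))) → A :=
    fun p => ⟨p.2.1.map Subtype.val, p.2.2⟩
  have hf : Function.Bijective f := by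
    refine ⟨fun ⟨i, e, he⟩ ⟨j, e', he'⟩ hee => ?_, fun ⟨e, he⟩ => ?_⟩
    · obtain ⟨rfl, hee⟩ := Sigma.mk.inj_iff.1
        (h.sigma_eq_of_map_eq (hA he) (congrArg Subtype.val hee))
      obtain rfl := eq_of_heq hee
      rfl
    · induction e using Sym2.ind with | h x y => ?_
      obtain ⟨i, hx, hy⟩ := h.exists_mem_of_adj (hA he)
      exact ⟨⟨i, s(⟨x, hx⟩, ⟨y, hy⟩), he⟩, rfl⟩
  rw [← Nat.card_coe_set_eq, ← Nat.card_eq_of_bijective f hf, Nat.card_sigma]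
  simp only [Nat.card_coe_set_eq]

lemma preimage_iUnion_image (h : G.IsWedgeAt v S) {B : ∀ i, Set (Sym2 (S i))}
    (hB : ∀ i, B i ⊆ (G.induce (S i)).edgeSet) (i : ι) :
    Sym2.map Subtype.val ⁻¹' (⋃ j, Sym2.map Subtype.val '' B j) = B i := by
  ext e
  simp only [Set.mem_preimage, Set.mem_iUnion, Set.mem_image]
  refine ⟨fun ⟨j, e', he', hee⟩ => ?_, fun he => ⟨i, e, he, rfl⟩⟩
  obtain ⟨rfl, hee⟩ := Sigma.mk.inj_iff.1 <|
    h.sigma_eq_of_map_eq ((Embedding.induce (S j)).map_mem_edgeSet_iff.2 (hB j he')) hee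
  rwa [← eq_of_heq hee]

lemma yVal_eq [Finite V] [Fintype ι] (h : G.IsWedgeAt v S) {A : Set (Sym2 V)}
    (hA : A ⊆ G.edgeSet) :
    yVal G A =
      ∑ i, yVal (G.induce (S i)) (Sym2.map Subtype.val ⁻¹' A) - Fintype.card ι + 1 := by
  have hcomp := (h.mono (G.deleteEdges_le A)).numComp_add_card
  simp only [induce_deleteEdges] at hcomp
  have hedge := h.ncard_eq_sum_ncard_preimage hA
  simp only [yVal, Finset.sum_sub_distrib, ← Finset.mul_sum, Finset.sum_const, Finset.card_univ,
    nsmul_eq_mul, mul_one]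
  zify at hcomp hedge
  linarith

lemma yMax_eq [Finite V] [Fintype ι] (h : G.IsWedgeAt v S) :
    yMax G = ∑ i, yMax (G.induce (S i)) - Fintype.card ι + 1 := by
  apply le_antisymm
  · obtain ⟨A, hA, hAmax⟩ := exists_yVal_eq_yMax G
    rw [← hAmax, h.yVal_eq hA]
    gcongr with i
    exact yVal_le_yMax (preimage_subset_induce_edgeSet hA _)
  · choose B hB hBmax using fun i => exists_yVal_eq_yMax (G.induce (S i))
    have hBG : (⋃ i, Sym2.map Subtype.val '' B i) ⊆ G.edgeSet :=
      Set.iUnion_subset fun i => Set.image_subset_iff.2 fun e he =>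
        (Embedding.induce (S i)).map_mem_edgeSet_iff.2 (hB i he)
    calc ∑ i, yMax (G.induce (S i)) - Fintype.card ι + 1
        = yVal G (⋃ i, Sym2.map Subtype.val '' B i) := by
          simp only [h.yVal_eq hBG, h.preimage_iUnion_image hB, hBmax]
      _ ≤ yMax G := yVal_le_yMax hBG

end IsWedgeAt

lemma isWedgeAt_connectedComponent_induce_compl (G : SimpleGraph V) (v : V) :
    G.IsWedgeAt v fun c : (G.induce ({v}ᶜ : Set V)).ConnectedComponent =>
      Subtype.val '' c.supp ∪ {v} where
  mem _ := Or.inr rfl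
  inter_subset c d hcd x := by
    rintro ⟨⟨y, hyc, rfl⟩ | hx, ⟨z, hzd, hzy⟩ | hx⟩
    · rw [ConnectedComponent.mem_supp_iff] at hyc hzd
      exact absurd (hyc.symm.trans (Subtype.ext hzy ▸ hzd)) hcd
    all_goals exact hx
  exists_mem x hx := ⟨_, Or.inl ⟨⟨x, hx⟩, rfl, rfl⟩⟩
  exists_mem_of_adj x y hxy := by
    by_cases hx : x = v
    · subst hx
      exact ⟨_, Or.inr rfl, Or.inl ⟨⟨y, hxy.ne.symm⟩, rfl, rfl⟩⟩
    by_cases hy : y = v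
    · subst hy
      exact ⟨_, Or.inl ⟨⟨x, hx⟩, rfl, rfl⟩, Or.inr rfl⟩
    have hxy' : (G.induce ({v}ᶜ : Set V)).Adj ⟨x, hx⟩ ⟨y, hy⟩ := hxy
    exact ⟨_, Or.inl ⟨⟨x, hx⟩, rfl, rfl⟩,
      Or.inl ⟨⟨y, hy⟩, ConnectedComponent.sound hxy'.reachable.symm, rfl⟩⟩

end SimpleGraph

theorem yMax_eq_of_cutVertex_general {V : Type*} [Finite V]
    (G : SimpleGraph V) (hG : G.Connected) (v : V) :
    (∀ c : (G.induce ({v}ᶜ : Set V)).ConnectedComponent,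
        (G.induce ((Subtype.val '' c.supp) ∪ {v})).Connected) ∧
    yMax G = (∑ᶠ c : (G.induce ({v}ᶜ : Set V)).ConnectedComponent,
        yMax (G.induce ((Subtype.val '' c.supp) ∪ {v})))
      - (Nat.card (G.induce ({v}ᶜ : Set V)).ConnectedComponent : ℤ) + 1 := by
  have h := G.isWedgeAt_connectedComponent_induce_compl v
  have := Fintype.ofFinite (G.induce ({v}ᶜ : Set V)).ConnectedComponent
  refine ⟨h.induce_connected hG, ?_⟩
  rw [h.yMax_eq, finsum_eq_sum_of_fintype, Nat.card_eq_fintype_card]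

/-- If `v` is a cut vertex of a connected finite simple graph `G`, `H₁, …, H_k` (`k ≥ 2`) are
the connected components of `G - v`, and `G_i` is the subgraph of `G` induced by
`V(H_i) ∪ {v}`, then each `G_i` is connected and `y_G = (Σ_i y_{G_i}) - k + 1`. -/
theorem yMax_eq_of_cutVertex {V : Type*} [Finite V]
    (G : SimpleGraph V) (hG : G.Connected) (v : V)
    (hcut : ¬ (G.induce ({v}ᶜ : Set V)).Connected)
    (hk : 2 ≤ Nat.card (G.induce ({v}ᶜ : Set V)).ConnectedComponent) :
    (∀ c : (G.induce ({v}ᶜ : Set V)).ConnectedComponent,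
        (G.induce ((Subtype.val '' c.supp) ∪ {v})).Connected) ∧
    yMax G = (∑ᶠ c : (G.induce ({v}ᶜ : Set V)).ConnectedComponent,
        yMax (G.induce ((Subtype.val '' c.supp) ∪ {v})))
      - (Nat.card (G.induce ({v}ᶜ : Set V)).ConnectedComponent : ℤ) + 1 :=
  yMax_eq_of_cutVertex_general G hG v
end

section
/- If G is a 4-edge-connected finite simple graph, then x_G = 1 and y_G = 1. -/
open SimpleGraph

/-- A finite simple graph is `k`-edge-connected if it has at least two vertices and removing
fewer than `k` edges leaves it connected. -/
def EdgeConnected {V : Type*} (G : SimpleGraph V) (k : ℕ) : Prop :=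
  1 < Nat.card V ∧ ∀ A ⊆ G.edgeSet, A.ncard < k → (G.deleteEdges A).Connected

/-- `x_G`: the minimum, over all spanning trees `T` of `G`, of the number of connected
components of `G - E(T)`. -/
noncomputable def xMin {V : Type*} (G : SimpleGraph V) : ℕ :=
  sInf { m : ℕ | ∃ T : SimpleGraph V, T ≤ G ∧ T.IsTree ∧
    numComp (G.deleteEdges T.edgeSet) = m }

/-!
A 4-edge-connected graph contains two edge-disjoint spanning trees (the case `k = 2` of the
Nash-Williams–Tutte theorem). Take `k` edge-disjoint forests with the most edges in total and
call an edge free if some sequence of exchanges leaves it unused. Every forest is connected inside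
each component of the free graph, so if that graph has `p` components, at most `k (p - 1)` edges
join them; but in a `2k`-edge-connected graph each component is left by at least `2k` edges, so
at least `k p` edges join them, forcing `p = 1`.

Given disjoint spanning trees `T₁`, `T₂`, the graph `G - E(T₁)` contains `T₂` and is connected,
so `x_G = 1`. For `y_G`, each component of `G - A` is left by at least four edges of `A`, so
`|A| ≥ 2 c(G - A)` once `c(G - A) ≥ 2`; hence `y_G(A) ≤ 1`, with equality at `A = ∅`.
-/

namespace SimpleGraph

variable {V : Type*}

lemma Walk.reachable_of_forall_mem_edges {G H : SimpleGraph V} {u v : V} (w : G.Walk u v)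
    (h : ∀ a b, s(a, b) ∈ w.edges → H.Reachable a b) : H.Reachable u v := by
  induction w with
  | nil => rfl
  | cons _ w ih => exact (h _ _ (by simp)).trans (ih fun a b hab => h a b (by simp [hab]))

lemma Reachable.of_forall_adj_reachable {G H : SimpleGraph V}
    (h : ∀ ⦃a b⦄, G.Adj a b → H.Reachable a b) {u v : V} (huv : G.Reachable u v) :
    H.Reachable u v :=
  let ⟨w⟩ := huv
  w.reachable_of_forall_mem_edges fun _ _ hab => h (w.adj_of_mem_edges hab)

lemma numComp_eq_one_iff {G : SimpleGraph V} : numComp G = 1 ↔ G.Connected := by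
  rw [numComp, Nat.card_eq_one_iff_unique, connected_iff]
  constructor
  · rintro ⟨_, ⟨c⟩⟩
    exact ⟨fun _ _ => ConnectedComponent.exact (Subsingleton.elim _ _),
      ⟨c.exists_rep.choose⟩⟩
  · rintro ⟨hG, _⟩
    exact ⟨hG.subsingleton_connectedComponent, inferInstance⟩

section Components

variable [Finite V] {G H : SimpleGraph V}

lemma numComp_pos [Nonempty V] (G : SimpleGraph V) : 0 < numComp G :=
  Nat.card_pos

lemma numComp_le_of_forall_adj_reachable (h : ∀ ⦃a b⦄, G.Adj a b → H.Reachable a b) :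
    numComp H ≤ numComp G := by
  refine Nat.card_le_card_of_surjective
    (ConnectedComponent.lift H.connectedComponentMk fun _ _ p _ =>
      ConnectedComponent.sound (p.reachable.of_forall_adj_reachable h)) ?_
  exact ConnectedComponent.ind fun v => ⟨G.connectedComponentMk v, rfl⟩

lemma numComp_lt_of_isBridge {u v : V} (huv : G.Adj u v) (h : G.IsBridge s(u, v)) :
    numComp G < numComp (G.deleteEdges {s(u, v)}) := by
  have := Fintype.ofFinite (G.deleteEdges {s(u, v)}).ConnectedComponent
  have := Fintype.ofFinite G.ConnectedComponent
  simp only [numComp, Nat.card_eq_fintype_card]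
  refine Fintype.card_lt_of_surjective_not_injective _
    (ConnectedComponent.surjective_map_ofLE (deleteEdges_le _)) fun hinj => h ?_
  exact ConnectedComponent.exact (hinj (ConnectedComponent.sound huv.reachable))

lemma IsAcyclic.numComp_add_ncard_le {F : SimpleGraph V} (hF : F.IsAcyclic) {S : Set (Sym2 V)}
    (hS : S ⊆ F.edgeSet) : numComp F + S.ncard ≤ numComp (F.deleteEdges S) := by
  induction S, S.toFinite using Set.Finite.induction_on with
  | empty => simp
  | @insert e T heT _ ih =>
    rw [Set.insert_subset_iff] at hS
    induction e with | h u v =>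
    have hadj : (F.deleteEdges T).Adj u v := (deleteEdges_adj ..).2 ⟨hS.1, heT⟩
    have hbridge : (F.deleteEdges T).IsBridge s(u, v) :=
      isAcyclic_iff_forall_isBridge.1 (hF.anti (deleteEdges_le _)) hadj
    have hlt := numComp_lt_of_isBridge hadj hbridge
    rw [deleteEdges_deleteEdges, Set.union_singleton] at hlt
    have := ih hS.2
    rw [Set.ncard_insert_of_notMem heT]
    omega

end Components

def crossEdges (G H : SimpleGraph V) : Set (Sym2 V) :=
  {e ∈ G.edgeSet | ¬ (e.map H.connectedComponentMk).IsDiag}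

@[simp]
lemma mk_mem_crossEdges {G H : SimpleGraph V} {a b : V} :
    s(a, b) ∈ crossEdges G H ↔ G.Adj a b ∧ ¬ H.Reachable a b := by
  simp [crossEdges, ConnectedComponent.eq]

lemma crossEdges_deleteEdges_subset (G : SimpleGraph V) (A : Set (Sym2 V)) :
    crossEdges G (G.deleteEdges A) ⊆ A := by
  rintro ⟨a, b⟩ h
  rw [mk_mem_crossEdges] at h
  by_contra hA
  exact h.2 ((deleteEdges_adj ..).2 ⟨h.1, hA⟩).reachable

lemma IsAcyclic.not_reachable_deleteEdges_of_mem_edges {F : SimpleGraph V} (hF : F.IsAcyclic)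
    {u v : V} (p : F.Path u v) {e : Sym2 V} (he : e ∈ p.1.edges) :
    ¬ (F.deleteEdges {e}).Reachable u v := by
  classical
  rintro ⟨q⟩
  have hp : p = ⟨q.toPath.1.mapLe (deleteEdges_le _), q.toPath.2.mapLe _⟩ :=
    (hF.subsingleton_path u v).elim _ _
  rw [hp, Walk.edges_mapLe_eq_edges] at he
  simpa using q.edges_subset_edgeSet (q.edges_toPath_subset_edges he)

lemma IsAcyclic.deleteEdges_sup_edge {F : SimpleGraph V} (hF : F.IsAcyclic) {u v : V}
    (p : F.Path u v) {e : Sym2 V} (he : e ∈ p.1.edges) :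
    (F.deleteEdges {e} ⊔ edge u v).IsAcyclic :=
  (hF.anti (deleteEdges_le _)).sup_edge_of_not_reachable
    (hF.not_reachable_deleteEdges_of_mem_edges p he)

section Packing

variable {ι : Type*} {G : SimpleGraph V}

def IsForestPacking (G : SimpleGraph V) (F : ι → SimpleGraph V) : Prop :=
  (∀ i, F i ≤ G ∧ (F i).IsAcyclic) ∧
    Pairwise fun i j => Disjoint (F i).edgeSet (F j).edgeSet

lemma isForestPacking_bot : IsForestPacking G fun _ : ι => ⊥ :=
  ⟨fun _ => ⟨bot_le, isAcyclic_bot⟩, fun _ _ _ => by simp⟩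

lemma IsForestPacking.update [DecidableEq ι] {F : ι → SimpleGraph V} (hF : IsForestPacking G F)
    {i : ι} {H : SimpleGraph V} (hHG : H ≤ G) (hH : H.IsAcyclic) {e : Sym2 V}
    (he : ∀ j, e ∉ (F j).edgeSet) (hsub : H.edgeSet ⊆ insert e (F i).edgeSet) :
    IsForestPacking G (Function.update F i H) := by
  have hdisj : ∀ j ≠ i, Disjoint H.edgeSet (F j).edgeSet := fun j hj =>
    Set.disjoint_of_subset_left hsub (Set.disjoint_insert_left.2 ⟨he j, hF.2 hj.symm⟩)
  refine ⟨fun j => ?_, fun j k hjk => ?_⟩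
  · rcases eq_or_ne j i with rfl | hj
    · simpa using ⟨hHG, hH⟩
    · simpa [hj] using hF.1 j
  · simp only [Function.update_apply]
    split_ifs with hj hk hk
    · exact absurd (hj.trans hk.symm) hjk
    · exact hdisj k hk
    · exact (hdisj j hj).symm
    · exact hF.2 hjk

variable [Fintype ι]

noncomputable def totalEdges (F : ι → SimpleGraph V) : ℕ :=
  ∑ i, (F i).edgeSet.ncard

lemma totalEdges_update_add [DecidableEq ι] (F : ι → SimpleGraph V) (i : ι)
    (H : SimpleGraph V) :
    totalEdges (Function.update F i H) + (F i).edgeSet.ncard = totalEdges F + H.edgeSet.ncard := by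
  unfold totalEdges
  rw [← Finset.add_sum_erase _ _ (Finset.mem_univ i),
    ← Finset.add_sum_erase _ (fun j => (F j).edgeSet.ncard) (Finset.mem_univ i),
    Finset.sum_congr rfl fun j hj => by rw [Function.update_of_ne (Finset.ne_of_mem_erase hj)],
    Function.update_self]
  ring

variable {F F₀ : ι → SimpleGraph V}

-- Abstracts the exchange step: add an unused edge `e` to one forest, delete an edge of the cycle
-- it closes.
def IsExchange (G : SimpleGraph V) (F F' : ι → SimpleGraph V) : Prop :=
  IsForestPacking G F' ∧ totalEdges F' = totalEdges F ∧
    ∃ e ∈ G.edgeSet, (∀ j, e ∉ (F j).edgeSet) ∧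
      ∀ j, (F' j).edgeSet ⊆ insert e (F j).edgeSet

def freeEdges (G : SimpleGraph V) (F₀ : ι → SimpleGraph V) : Set (Sym2 V) :=
  {e ∈ G.edgeSet |
    ∃ F, Relation.ReflTransGen (IsExchange G) F₀ F ∧ ∀ j, e ∉ (F j).edgeSet}

def freeGraph (G : SimpleGraph V) (F₀ : ι → SimpleGraph V) : SimpleGraph V :=
  fromEdgeSet (freeEdges G F₀)

def forestInFreeComponents (G : SimpleGraph V) (F₀ : ι → SimpleGraph V) (i : ι) :
    SimpleGraph V :=
  (F₀ i).deleteEdges (crossEdges (F₀ i) (freeGraph G F₀))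

lemma IsForestPacking.of_reflTransGen_isExchange (hF₀ : IsForestPacking G F₀)
    (h : Relation.ReflTransGen (IsExchange G) F₀ F) :
    IsForestPacking G F ∧ totalEdges F = totalEdges F₀ := by
  induction h with
  | refl => exact ⟨hF₀, rfl⟩
  | tail _ hstep ih => exact ⟨hstep.1, hstep.2.1.trans ih.2⟩

lemma crossEdges_freeGraph_subset :
    crossEdges G (freeGraph G F₀) ⊆ ⋃ i, crossEdges (F₀ i) (freeGraph G F₀) := by
  rintro ⟨a, b⟩ h
  rw [mk_mem_crossEdges] at h
  by_contra hnot
  simp only [Set.mem_iUnion, mk_mem_crossEdges, not_exists, not_and, not_not] at hnot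
  have hfree : s(a, b) ∈ freeEdges G F₀ := ⟨h.1, F₀, .refl, fun j hj => h.2 (hnot j hj)⟩
  exact h.2 ((fromEdgeSet_adj _).2 ⟨hfree, h.1.ne⟩).reachable

variable [Finite V] [DecidableEq ι]

lemma IsForestPacking.reachable_of_forall_not_mem (hF : IsForestPacking G F)
    (hmax : ∀ F' : ι → SimpleGraph V, IsForestPacking G F' → totalEdges F' ≤ totalEdges F)
    {u v : V} (huv : G.Adj u v) (hfree : ∀ j, s(u, v) ∉ (F j).edgeSet) (i : ι) :
    (F i).Reachable u v := by
  by_contra hr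
  have hH : (F i ⊔ edge u v).edgeSet = insert s(u, v) (F i).edgeSet := by
    rw [edgeSet_sup, edgeSet_edge_of_ne huv.ne, Set.union_singleton]
  have hpack := hF.update (sup_le (hF.1 i).1 ((edge_le_iff _).2 (Or.inr huv)))
    ((hF.1 i).2.sup_edge_of_not_reachable hr) hfree hH.le
  have hsize := totalEdges_update_add F i (F i ⊔ edge u v)
  rw [hH, Set.ncard_insert_of_notMem (hfree i)] at hsize
  have := hmax _ hpack
  omega

lemma IsForestPacking.exists_isExchange_forall_not_mem (hF : IsForestPacking G F) {i : ι}
    {u v : V} (huv : G.Adj u v) (hfree : ∀ j, s(u, v) ∉ (F j).edgeSet) (p : (F i).Path u v)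
    {e : Sym2 V} (he : e ∈ p.1.edges) :
    ∃ F', IsExchange G F F' ∧ ∀ j, e ∉ (F' j).edgeSet := by
  have heF : e ∈ (F i).edgeSet := p.1.edges_subset_edgeSet he
  set H := (F i).deleteEdges {e} ⊔ edge u v
  have hH : H.edgeSet = insert s(u, v) ((F i).edgeSet \ {e}) := by
    rw [edgeSet_sup, edgeSet_deleteEdges, edgeSet_edge_of_ne huv.ne, Set.union_singleton]
  have hsub : H.edgeSet ⊆ insert s(u, v) (F i).edgeSet :=
    hH ▸ Set.insert_subset_insert Set.sdiff_subset
  have hHG : H ≤ G :=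
    sup_le ((deleteEdges_le _).trans (hF.1 i).1) ((edge_le_iff _).2 (Or.inr huv))
  have hcard : H.edgeSet.ncard = (F i).edgeSet.ncard := by
    rw [hH, Set.ncard_insert_of_notMem (fun h => hfree i h.1),
      Set.ncard_sdiff_singleton_add_one heF]
  have hpack := hF.update hHG ((hF.1 i).2.deleteEdges_sup_edge p he) hfree hsub
  refine ⟨Function.update F i H, ⟨hpack, ?_, s(u, v), huv, hfree, fun j => ?_⟩, fun j => ?_⟩
  · have := totalEdges_update_add F i H
    omega
  · rcases eq_or_ne j i with rfl | hj
    · simp [hsub]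
    · simp [hj]
  · rcases eq_or_ne j i with rfl | hj
    · simp only [Function.update_self, hH, Set.mem_insert_iff, Set.mem_sdiff,
        Set.mem_singleton_iff, not_true_eq_false, and_false, or_false]
      exact fun h => hfree j (h ▸ heF)
    · simpa [hj] using Set.disjoint_left.1 (hF.2 hj.symm) heF

section Maximum

variable (hF₀ : IsForestPacking G F₀)
  (hmax : ∀ F : ι → SimpleGraph V, IsForestPacking G F → totalEdges F ≤ totalEdges F₀)
include hF₀ hmax

-- `hnew` is the invariant proved in `reachable_forestInFreeComponents_of_mem`: the two lemmas
-- are one induction along sequences of exchanges.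
lemma reachable_forestInFreeComponents_of_forall_not_mem
    (hF : Relation.ReflTransGen (IsExchange G) F₀ F)
    (hnew : ∀ i a b, s(a, b) ∈ (F i).edgeSet → s(a, b) ∉ (F₀ i).edgeSet →
      (forestInFreeComponents G F₀ i).Reachable a b)
    {u v : V} (huv : G.Adj u v) (hfree : ∀ j, s(u, v) ∉ (F j).edgeSet) (i : ι) :
    (forestInFreeComponents G F₀ i).Reachable u v := by
  classical
  obtain ⟨hF', hsize⟩ := hF₀.of_reflTransGen_isExchange hF
  obtain ⟨w⟩ := hF'.reachable_of_forall_not_mem (hsize ▸ hmax) huv hfree i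
  refine w.toPath.1.reachable_of_forall_mem_edges fun a b hab => ?_
  by_cases hab₀ : s(a, b) ∈ (F₀ i).edgeSet
  · obtain ⟨F', hF'ex, hF'free⟩ := hF'.exists_isExchange_forall_not_mem huv hfree w.toPath hab
    have hfreeEdge : s(a, b) ∈ freeEdges G F₀ :=
      ⟨edgeSet_mono (hF₀.1 i).1 hab₀, F', hF.tail hF'ex, hF'free⟩
    have hfreeAdj : (freeGraph G F₀).Adj a b :=
      (fromEdgeSet_adj _).2 ⟨hfreeEdge, (F₀ i).ne_of_adj hab₀⟩
    exact ((deleteEdges_adj ..).2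
      ⟨hab₀, fun h => (mk_mem_crossEdges.1 h).2 hfreeAdj.reachable⟩).reachable
  · exact hnew i a b (w.toPath.1.edges_subset_edgeSet hab) hab₀

lemma reachable_forestInFreeComponents_of_mem
    (hF : Relation.ReflTransGen (IsExchange G) F₀ F) (i : ι) {a b : V}
    (hab : s(a, b) ∈ (F i).edgeSet) (hab₀ : s(a, b) ∉ (F₀ i).edgeSet) :
    (forestInFreeComponents G F₀ i).Reachable a b := by
  induction hF generalizing i a b with
  | refl => exact absurd hab hab₀
  | tail hreach hstep ih =>
    obtain ⟨-, -, e, heG, hefree, hsub⟩ := hstep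
    rcases hsub i hab with heq | hold
    · rw [← heq] at heG hefree
      exact reachable_forestInFreeComponents_of_forall_not_mem hF₀ hmax hreach
        (fun j _ _ => ih j) heG hefree i
    · exact ih i hold hab₀

lemma freeGraph_adj_reachable_forestInFreeComponents (i : ι) ⦃a b : V⦄
    (hab : (freeGraph G F₀).Adj a b) : (forestInFreeComponents G F₀ i).Reachable a b := by
  obtain ⟨⟨hG, F, hF, hfree⟩, -⟩ := (fromEdgeSet_adj _).1 hab
  exact reachable_forestInFreeComponents_of_forall_not_mem hF₀ hmax hF
    (fun j _ _ => reachable_forestInFreeComponents_of_mem hF₀ hmax hF j) hG hfree i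

lemma ncard_crossEdges_freeGraph_add_one_le [Nonempty V] (i : ι) :
    (crossEdges (F₀ i) (freeGraph G F₀)).ncard + 1 ≤ numComp (freeGraph G F₀) := by
  have hsplit := (hF₀.1 i).2.numComp_add_ncard_le
    (S := crossEdges (F₀ i) (freeGraph G F₀)) fun _ he => he.1
  have hle := numComp_le_of_forall_adj_reachable
    (freeGraph_adj_reachable_forestInFreeComponents hF₀ hmax i)
  have hpos := numComp_pos (F₀ i)
  rw [← forestInFreeComponents] at hsplit
  omega

lemma ncard_crossEdges_freeGraph_add_card_le [Nonempty V] :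
    (crossEdges G (freeGraph G F₀)).ncard + Fintype.card ι ≤
      Fintype.card ι * numComp (freeGraph G F₀) :=
  calc (crossEdges G (freeGraph G F₀)).ncard + Fintype.card ι
      ≤ ∑ i, (crossEdges (F₀ i) (freeGraph G F₀)).ncard + ∑ _i : ι, 1 := by
        gcongr
        · exact (Set.ncard_le_ncard crossEdges_freeGraph_subset (Set.toFinite _)).trans
            (Set.ncard_iUnion_le_of_fintype _)
        · simp
    _ ≤ ∑ _i : ι, numComp (freeGraph G F₀) := by
        rw [← Finset.sum_add_distrib]
        exact Finset.sum_le_sum fun i _ => ncard_crossEdges_freeGraph_add_one_le hF₀ hmax i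
    _ = Fintype.card ι * numComp (freeGraph G F₀) := by simp

end Maximum

end Packing

end SimpleGraph

section EdgeConnected

variable {V : Type*} {G : SimpleGraph V} {k : ℕ}

lemma EdgeConnected.connected (hG : EdgeConnected G k) (hk : 0 < k) : G.Connected := by
  simpa using hG.2 ∅ (Set.empty_subset _) (by simpa using hk)

variable [Finite V]

lemma EdgeConnected.le_ncard_crossEdges_incident {H : SimpleGraph V} (hG : EdgeConnected G k)
    (hH : 2 ≤ numComp H) (c : H.ConnectedComponent) :
    k ≤ {e ∈ crossEdges G H | ∃ a ∈ e, H.connectedComponentMk a = c}.ncard := by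
  set B := {e ∈ crossEdges G H | ∃ a ∈ e, H.connectedComponentMk a = c}
  by_contra! hB
  have hconn := hG.2 B (fun e he => he.1.1) hB
  obtain ⟨x, rfl⟩ := c.exists_rep
  have : Nontrivial H.ConnectedComponent := Finite.one_lt_card_iff_nontrivial.1 hH
  obtain ⟨c', hc'⟩ := exists_ne (H.connectedComponentMk x)
  obtain ⟨y, rfl⟩ := c'.exists_rep
  obtain ⟨w⟩ := hconn.preconnected x y
  obtain ⟨⟨⟨a, b⟩, hab⟩, -, ha, hb⟩ :=
    w.exists_boundary_dart (H.connectedComponentMk x).supp rfl hc'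
  rw [deleteEdges_adj] at hab
  have hcross : s(a, b) ∈ crossEdges G H :=
    mk_mem_crossEdges.2 ⟨hab.1, fun hr => hb ((ConnectedComponent.sound hr).symm.trans ha)⟩
  exact hab.2 ⟨hcross, a, Sym2.mem_mk_left a b, ha⟩

lemma EdgeConnected.mul_numComp_le_two_mul_ncard_crossEdges {H : SimpleGraph V}
    (hG : EdgeConnected G k) (hH : 2 ≤ numComp H) :
    k * numComp H ≤ 2 * (crossEdges G H).ncard := by
  classical
  have := Fintype.ofFinite V
  have := Fintype.ofFinite H.ConnectedComponent
  let touches (c : H.ConnectedComponent) (e : Sym2 V) : Prop :=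
    ∃ a ∈ e, H.connectedComponentMk a = c
  have hcount := Finset.card_nsmul_le_card_nsmul (s := Finset.univ)
    (t := (crossEdges G H).toFinset) touches (m := k) (n := (2 : ℕ)) ?_ ?_
  · simpa [numComp, Nat.card_eq_fintype_card, Set.ncard_eq_toFinset_card', mul_comm] using hcount
  · intro c _
    rw [← Set.ncard_coe_finset, Finset.coe_bipartiteAbove]
    simpa using hG.le_ncard_crossEdges_incident hH c
  · rintro ⟨a, b⟩ _
    refine (Finset.card_le_card fun c hc => ?_).trans
      (Finset.card_le_two (a := H.connectedComponentMk a) (b := H.connectedComponentMk b))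
    obtain ⟨-, x, hx, rfl⟩ := (Finset.mem_bipartiteBelow _).1 hc
    rcases Sym2.mem_iff.1 hx with rfl | rfl <;> simp

lemma EdgeConnected.yVal_le_one (hG : EdgeConnected G 4) (A : Set (Sym2 V)) : yVal G A ≤ 1 := by
  have hA := Set.ncard_le_ncard (crossEdges_deleteEdges_subset G A) A.toFinite
  rcases lt_or_ge (numComp (G.deleteEdges A)) 2 with hc | hc
  · unfold yVal
    omega
  · have := hG.mul_numComp_le_two_mul_ncard_crossEdges hc
    unfold yVal
    omega

lemma EdgeConnected.yMax_eq_one (hG : EdgeConnected G 4) : yMax G = 1 := by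
  have hempty : yVal G ∅ = 1 := by
    simp [yVal, numComp_eq_one_iff.2 (hG.connected (by norm_num))]
  exact IsGreatest.csSup_eq ⟨⟨∅, Set.empty_subset _, hempty⟩,
    fun _ ⟨A, _, hA⟩ => hA ▸ hG.yVal_le_one A⟩

theorem EdgeConnected.exists_isForestPacking_isTree {ι : Type*} [Fintype ι]
    (hG : EdgeConnected G (2 * Fintype.card ι)) :
    ∃ T : ι → SimpleGraph V, IsForestPacking G T ∧ ∀ i, (T i).IsTree := by
  classical
  have : Nonempty V := (Nat.card_pos_iff.1 (by linarith [hG.1])).1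
  obtain ⟨F₀, hF₀, hmax⟩ := Set.Finite.exists_maximalFor totalEdges
    {F : ι → SimpleGraph V | IsForestPacking G F} (Set.toFinite _) ⟨_, isForestPacking_bot⟩
  have hmax' (F : ι → SimpleGraph V) (hF : IsForestPacking G F) :
      totalEdges F ≤ totalEdges F₀ :=
    (le_total _ _).elim id (hmax hF)
  refine ⟨F₀, hF₀, fun i => ⟨?_, (hF₀.1 i).2⟩⟩
  have hfree : numComp (freeGraph G F₀) < 2 := by
    by_contra! h
    have := hG.mul_numComp_le_two_mul_ncard_crossEdges h
    have := ncard_crossEdges_freeGraph_add_card_le hF₀ hmax'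
    have : 0 < Fintype.card ι := Fintype.card_pos_iff.2 ⟨i⟩
    -- at least `card ι * p` crossing edges are needed, at most `card ι * (p - 1)` exist
    nlinarith
  have hcomp := numComp_le_of_forall_adj_reachable
    (freeGraph_adj_reachable_forestInFreeComponents hF₀ hmax' i)
  have hconn : (forestInFreeComponents G F₀ i).Connected :=
    numComp_eq_one_iff.1 (le_antisymm (by omega) (numComp_pos _))
  exact hconn.mono (deleteEdges_le _)

end EdgeConnected

lemma xMin_eq_one_of_isTree_of_disjoint {V : Type*} [Finite V] {G T₁ T₂ : SimpleGraph V}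
    (hT₁G : T₁ ≤ G) (hT₂G : T₂ ≤ G) (hT₁ : T₁.IsTree) (hT₂ : T₂.IsTree)
    (hdisj : Disjoint T₁.edgeSet T₂.edgeSet) : xMin G = 1 := by
  have : Nonempty V := hT₁.connected.nonempty
  have hT₂le : T₂ ≤ G.deleteEdges T₁.edgeSet := fun _ _ h =>
    (deleteEdges_adj ..).2 ⟨hT₂G h, Set.disjoint_right.1 hdisj h⟩
  have hmem : 1 ∈ {m : ℕ | ∃ T : SimpleGraph V, T ≤ G ∧ T.IsTree ∧
      numComp (G.deleteEdges T.edgeSet) = m} :=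
    ⟨T₁, hT₁G, hT₁, numComp_eq_one_iff.2 (hT₂.connected.mono hT₂le)⟩
  exact le_antisymm (Nat.sInf_le hmem)
    (le_csInf ⟨1, hmem⟩ fun _ ⟨_, _, _, hm⟩ => hm ▸ numComp_pos _)

/-- If `G` is a 4-edge-connected finite simple graph, then `x_G = 1` and `y_G = 1`. -/
theorem xMin_eq_one_and_yMax_eq_one_of_four_edgeConnected {V : Type*} [Finite V]
    (G : SimpleGraph V) (h : EdgeConnected G 4) :
    xMin G = 1 ∧ yMax G = 1 := by
  obtain ⟨T, hT, hTree⟩ :=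
    EdgeConnected.exists_isForestPacking_isTree (ι := Fin 2) (by simpa using h)
  exact ⟨xMin_eq_one_of_isTree_of_disjoint (hT.1 0).1 (hT.1 1).1 (hTree 0) (hTree 1)
    (hT.2 zero_ne_one), h.yMax_eq_one⟩
end

section
/- If G is a connected finite simple graph of order n that is not a complete graph, then y_G ≤ min{n, 3·χ(G^c)}, where G^c is the complement of G and χ denotes the chromatic number. -/
open SimpleGraph

/-!
Deleting one edge creates at most one new component, so `c(G - A) ≤ c(G) + |A| = 1 + |A|` for
connected `G`, whence `2 c(G - A) - |A| - 1 ≤ c(G - A) ≤ n`.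

For the second bound take a proper colouring of `Gᶜ` with `k` colours; its colour classes are
cliques of `G`. If `m_a` components of `G - A` meet class `a`, one vertex of class `a` from each
of them gives `m_a.choose 2` edges of `G` joining different components of `G - A`, so all of them
lie in `A`, and distinct classes give disjoint sets of edges. Hence
`|A| ≥ ∑ₐ m_a.choose 2 ≥ ∑ₐ (2 m_a - 3) ≥ 2 c(G - A) - 3k`, using
`m.choose 2 - 2m + 3 = (m - 2)(m - 3) / 2 ≥ 0`.
-/

open Finset

theorem Finset.disjoint_image_offDiag {α : Type*} [DecidableEq α] {s t : Finset α}
    (h : Disjoint s t) :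
    Disjoint (s.offDiag.image Sym2.mk.uncurry) (t.offDiag.image Sym2.mk.uncurry) := by
  refine disjoint_left.mpr ?_
  simp only [mem_image, mem_offDiag, Prod.exists, Function.uncurry_apply_pair, not_exists,
    not_and, forall_exists_index, and_imp]
  rintro _ a b ha - - rfl c d hc hd - hcd
  rcases Sym2.eq_iff.mp hcd with ⟨rfl, -⟩ | ⟨-, rfl⟩
  · exact disjoint_left.mp h ha hc
  · exact disjoint_left.mp h ha hd

theorem Finset.sum_choose_two_le_ncard {ι α : Type*} [DecidableEq α] {s : Finset ι}
    {T : ι → Finset α} (hT : (s : Set ι).PairwiseDisjoint T) {A : Set (Sym2 α)} (hA : A.Finite)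
    (hTA : ∀ i ∈ s, ↑((T i).offDiag.image Sym2.mk.uncurry) ⊆ A) :
    ∑ i ∈ s, (#(T i)).choose 2 ≤ A.ncard := by
  calc ∑ i ∈ s, (#(T i)).choose 2
      = #(s.biUnion fun i ↦ (T i).offDiag.image Sym2.mk.uncurry) := by
        rw [card_biUnion fun i hi j hj hij ↦ disjoint_image_offDiag (hT hi hj hij)]
        simp only [Sym2.card_image_offDiag]
    _ ≤ A.ncard := by
        rw [← Set.ncard_coe_finset]
        exact Set.ncard_le_ncard (by simpa using hTA) hA

theorem Nat.two_mul_le_choose_two_add_three : ∀ m : ℕ, 2 * m ≤ m.choose 2 + 3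
  | 0 | 1 | 2 => by decide
  | m + 3 => by
    have := Nat.two_mul_le_choose_two_add_three (m + 2)
    have : (m + 3).choose 2 = (m + 2).choose 1 + (m + 2).choose 2 := Nat.choose_succ_succ' _ _
    rw [Nat.choose_one_right] at this
    omega

namespace SimpleGraph

variable {V : Type*}

theorem Walk.reachable_deleteEdges_singleton_or {H : SimpleGraph V} (u v : V) {x y : V}
    (p : H.Walk x y) :
    (H.deleteEdges {s(u, v)}).Reachable x y ∨ (H.deleteEdges {s(u, v)}).Reachable x u ∨
      (H.deleteEdges {s(u, v)}).Reachable x v := by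
  induction p with
  | nil => exact Or.inl .rfl
  | @cons a b c hab p ih =>
    by_cases he : s(a, b) = s(u, v)
    · rcases Sym2.eq_iff.mp he with ⟨rfl, rfl⟩ | ⟨rfl, rfl⟩
      · exact Or.inr (Or.inl .rfl)
      · exact Or.inr (Or.inr .rfl)
    · have hab' : (H.deleteEdges {s(u, v)}).Adj a b := (deleteEdges_adj ..).mpr ⟨hab, he⟩
      exact ih.imp hab'.reachable.trans (Or.imp hab'.reachable.trans hab'.reachable.trans)

theorem card_connectedComponent_deleteEdges_singleton_le [Finite V] (H : SimpleGraph V)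
    (e : Sym2 V) :
    Nat.card (H.deleteEdges {e}).ConnectedComponent ≤ Nat.card H.ConnectedComponent + 1 := by
  classical
  induction e using Sym2.ind with | _ u v => ?_
  set H' := H.deleteEdges {s(u, v)}
  have : Fintype H'.ConnectedComponent := Fintype.ofFinite _
  have : Fintype H.ConnectedComponent := Fintype.ofFinite _
  set φ := ConnectedComponent.map (Hom.ofLE (H.deleteEdges_le {s(u, v)}))
  -- Deleting `s(u, v)` splits a component of `H` at most into those of `u` and `v`.
  have hinj : Set.InjOn φ ↑(univ.erase (H'.connectedComponentMk v)) := by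
    intro c₁ hc₁ c₂ hc₂ hφ
    induction c₁ using ConnectedComponent.ind with | _ x₁ => ?_
    induction c₂ using ConnectedComponent.ind with | _ x₂ => ?_
    simp only [coe_erase, coe_univ, Set.mem_sdiff, Set.mem_univ, Set.mem_singleton_iff,
      true_and] at hc₁ hc₂
    obtain ⟨p⟩ := ConnectedComponent.eq.mp hφ
    refine ConnectedComponent.eq.mpr ?_
    rcases p.reachable_deleteEdges_singleton_or u v with h | h₁ | h₁
    · exact h
    · rcases p.reverse.reachable_deleteEdges_singleton_or u v with h | h₂ | h₂
      · exact h.symm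
      · exact h₁.trans h₂.symm
      · exact absurd (ConnectedComponent.sound h₂) hc₂
    · exact absurd (ConnectedComponent.sound h₁) hc₁
  calc Nat.card H'.ConnectedComponent
      = #(univ.erase (H'.connectedComponentMk v)) + 1 := by
        rw [card_erase_add_one (mem_univ _), card_univ, Nat.card_eq_fintype_card]
    _ ≤ #(univ : Finset H.ConnectedComponent) + 1 := by
        gcongr; exact card_le_card_of_injOn φ (fun _ _ ↦ mem_coe.mpr (mem_univ _)) hinj
    _ = Nat.card H.ConnectedComponent + 1 := by rw [card_univ, Nat.card_eq_fintype_card]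

theorem card_connectedComponent_deleteEdges_le [Finite V] (G : SimpleGraph V)
    (A : Set (Sym2 V)) :
    Nat.card (G.deleteEdges A).ConnectedComponent ≤ Nat.card G.ConnectedComponent + A.ncard := by
  induction A, A.toFinite using Set.Finite.induction_on with
  | empty => simp
  | @insert e A heA hA ih =>
    rw [Set.ncard_insert_of_notMem heA hA, Set.insert_eq, Set.union_comm,
      ← deleteEdges_deleteEdges]
    have := card_connectedComponent_deleteEdges_singleton_le (G.deleteEdges A) e
    omega

theorem Coloring.isClique_colorClass_of_compl {α : Type*} {G : SimpleGraph V}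
    (C : Gᶜ.Coloring α) (a : α) : G.IsClique (C.colorClass a) :=
  (isIndepSet_compl G).mp (C.isIndepSet_colorClass a)

theorem image_offDiag_subset_of_isClique_of_injOn {G : SimpleGraph V} {A : Set (Sym2 V)}
    [DecidableEq V] {T : Finset V} (hT : G.IsClique T)
    (hinj : Set.InjOn (G.deleteEdges A).connectedComponentMk T) :
    ↑(T.offDiag.image Sym2.mk.uncurry) ⊆ A := by
  simp only [coe_image, coe_offDiag, Set.image_subset_iff]
  rintro ⟨x, y⟩ ⟨hx, hy, hxy⟩
  by_contra hA
  have hadj : (G.deleteEdges A).Adj x y := (deleteEdges_adj ..).mpr ⟨hT hx hy hxy, hA⟩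
  exact hxy (hinj hx hy (ConnectedComponent.sound hadj.reachable))

theorem two_mul_card_connectedComponent_deleteEdges_le [Finite V] {α : Type*} [Fintype α]
    {G : SimpleGraph V} (C : Gᶜ.Coloring α) (A : Set (Sym2 V)) :
    2 * Nat.card (G.deleteEdges A).ConnectedComponent ≤ A.ncard + 3 * Fintype.card α := by
  classical
  have : Fintype V := Fintype.ofFinite V
  set H := G.deleteEdges A
  have : Fintype H.ConnectedComponent := Fintype.ofFinite _
  have hT (a : α) : ∃ T : Finset V, ↑T ⊆ C.colorClass a ∧ Set.InjOn H.connectedComponentMk T ∧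
      T.image H.connectedComponentMk = (univ.filter (C · = a)).image H.connectedComponentMk :=
    exists_subset_injOn_image_eq_of_surjOn _ _ fun c hc ↦ by simpa [Coloring.colorClass] using hc
  choose T hTC hTinj hTimg using hT
  have hcover : Nat.card H.ConnectedComponent ≤ ∑ a, #(T a) := by
    rw [Nat.card_eq_fintype_card, ← card_univ]
    calc #(univ : Finset H.ConnectedComponent)
        ≤ #(univ.biUnion fun a ↦ (T a).image H.connectedComponentMk) := by
          refine card_le_card fun c _ ↦ ?_
          induction c using ConnectedComponent.ind with | _ v => ?_
          simp only [mem_biUnion, mem_univ, true_and, hTimg]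
          exact ⟨C v, mem_image_of_mem _ (by simp)⟩
      _ ≤ ∑ a, #((T a).image H.connectedComponentMk) := card_biUnion_le
      _ ≤ ∑ a, #(T a) := sum_le_sum fun a _ ↦ card_image_le
  have hedges : ∑ a, (#(T a)).choose 2 ≤ A.ncard :=
    sum_choose_two_le_ncard
      (fun a _ b _ hab ↦
        Finset.disjoint_left.mpr fun v ha hb ↦ hab ((hTC a ha).symm.trans (hTC b hb)))
      A.toFinite fun a _ ↦ image_offDiag_subset_of_isClique_of_injOn
        ((C.isClique_colorClass_of_compl a).subset (hTC a)) (hTinj a)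
  calc 2 * Nat.card H.ConnectedComponent ≤ ∑ a, 2 * #(T a) := by rw [← mul_sum]; omega
    _ ≤ ∑ a, ((#(T a)).choose 2 + 3) := sum_le_sum fun a _ ↦ Nat.two_mul_le_choose_two_add_three _
    _ = ∑ a, (#(T a)).choose 2 + 3 * Fintype.card α := by
        rw [sum_add_distrib, sum_const, card_univ, smul_eq_mul, mul_comm]
    _ ≤ A.ncard + 3 * Fintype.card α := by omega

end SimpleGraph

theorem yVal_le_natCard {V : Type*} [Finite V] {G : SimpleGraph V} (hG : G.Connected)
    (A : Set (Sym2 V)) :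
    yVal G A ≤ Nat.card V := by
  have hV : numComp (G.deleteEdges A) ≤ Nat.card V :=
    Nat.card_le_card_of_surjective _ Quot.mk_surjective
  have hG₁ : Nat.card G.ConnectedComponent ≤ 1 :=
    Finite.card_le_one_iff_subsingleton.mpr hG.preconnected.subsingleton_connectedComponent
  have hA := card_connectedComponent_deleteEdges_le G A
  unfold yVal numComp at *
  omega

theorem yVal_lt_three_mul_card {V α : Type*} [Finite V] [Fintype α] {G : SimpleGraph V}
    (C : Gᶜ.Coloring α) (A : Set (Sym2 V)) :
    yVal G A < 3 * Fintype.card α := by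
  have := two_mul_card_connectedComponent_deleteEdges_le C A
  unfold yVal numComp
  omega

theorem yMax_le_of_connected_not_complete_general {V : Type*} [Finite V]
    (G : SimpleGraph V) (hG : G.Connected)
    (n : ℕ) (hn : Nat.card V = n) :
    yMax G ≤ (n : ℤ) ∧ yMax G ≤ 3 * ((Gᶜ).chromaticNumber.toNat : ℤ) := by
  have hne : {y | ∃ A ⊆ G.edgeSet, yVal G A = y}.Nonempty := ⟨_, ∅, Set.empty_subset _, rfl⟩
  obtain ⟨C⟩ := Gᶜ.colorable_chromaticNumber_of_fintype
  refine ⟨csSup_le hne ?_, csSup_le hne ?_⟩ <;> rintro _ ⟨A, -, rfl⟩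
  · exact hn ▸ yVal_le_natCard hG A
  · simpa using (yVal_lt_three_mul_card C A).le

/-- If `G` is a connected finite simple graph of order `n` that is not complete, then
`y_G ≤ min {n, 3 χ(Gᶜ)}`. -/
theorem yMax_le_of_connected_not_complete {V : Type*} [Finite V]
    (G : SimpleGraph V) (hG : G.Connected) (hnc : G ≠ ⊤)
    (n : ℕ) (hn : Nat.card V = n) :
    yMax G ≤ (n : ℤ) ∧ yMax G ≤ 3 * ((Gᶜ).chromaticNumber.toNat : ℤ) :=
  yMax_le_of_connected_not_complete_general G hG n hn
end
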